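/- arXiv:2602.08712 — 5 statements merged into one kernel-verified Lean document; each statement's English description precedes it below -/
import Mathlib

section
/- For every natural number N ≥ 1, the set {λ ∈ ℝ : λ > 0 and det(−A_N(λ)) = 0} is nonempty; that is, there exists a positive value of the birth rate λ for which 0 is an eigenvalue of A_N(λ). -/
open Matrix Polynomial Filter

/-- The (N+1)×(N+1) matrix A_N(λ): diagonal −1, entry (0,1) equal to 2λ,
entries λ on the other super/sub-diagonal positions, 0 elsewhere. -/
noncomputable def matA (lam : ℝ) (N : ℕ) : Matrix (Fin (N + 1)) (Fin (N + 1)) ℝ :=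
  Matrix.of fun j k =>
    if j = k then -1
    else if (j : ℕ) = 0 ∧ (k : ℕ) = 1 then 2 * lam
    else if (j : ℕ) + 1 = (k : ℕ) ∨ (k : ℕ) + 1 = (j : ℕ) then lam
    else 0

/-- The (N+1)×(N+1) matrix C_N: zero diagonal, entry (0,1) equal to 2,
entries 1 on the other super/sub-diagonal positions, 0 elsewhere;
so that A_N(λ) = −I + λ·C_N. -/
noncomputable def matC (N : ℕ) : Matrix (Fin (N + 1)) (Fin (N + 1)) ℝ :=
  Matrix.of fun j k =>
    if j = k then 0
    else if (j : ℕ) = 0 ∧ (k : ℕ) = 1 then 2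
    else if (j : ℕ) + 1 = (k : ℕ) ∨ (k : ℕ) + 1 = (j : ℕ) then 1
    else 0

/-- The critical value λ_c(N) = inf {λ > 0 : det(−A_N(λ)) = 0}. -/
noncomputable def lamCrit (N : ℕ) : ℝ :=
  sInf {lam : ℝ | 0 < lam ∧ (-(matA lam N)).det = 0}

/-!
Since A_N(λ) = −I + λ C_N, for μ > 0 we have det(−A_N(1/μ)) = μ^{-(N+1)} det(μ I − C_N), so it
suffices to find a positive eigenvalue of C_N. Conjugating by diag(1, √2, …, √2) turns C_N into the
symmetric matrix with entries √(c_jk c_kj). That matrix has trace zero and is nonzero for N ≥ 1,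
so its real eigenvalues sum to zero without all vanishing: one of them is positive.
-/

namespace Matrix.IsHermitian

variable {𝕜 n : Type*} [RCLike 𝕜] [Fintype n] [DecidableEq n] {A : Matrix n n 𝕜}

theorem exists_eigenvalues_pos (hA : A.IsHermitian) (htrace : A.trace = 0) (hA0 : A ≠ 0) :
    ∃ i, 0 < hA.eigenvalues i := by
  by_contra! hnonpos
  have hsum : ∑ i, hA.eigenvalues i = 0 := by
    rwa [hA.trace_eq_sum_eigenvalues, ← RCLike.ofReal_sum, RCLike.ofReal_eq_zero] at htrace
  have hzero : hA.eigenvalues = 0 := funext fun i =>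
    (Finset.sum_eq_zero_iff_of_nonpos fun i _ => hnonpos i).mp hsum i (Finset.mem_univ i)
  exact hA0 (hA.eigenvalues_eq_zero_iff.mp hzero)

end Matrix.IsHermitian

theorem spectrum_eq_of_isUnit_of_mul_eq_mul {R A : Type*} [CommSemiring R] [Ring A] [Algebra R A]
    {a b u : A} (hu : IsUnit u) (h : u * a = b * u) : spectrum R a = spectrum R b := by
  obtain ⟨u, rfl⟩ := hu
  have hb : b = u * a * ↑u⁻¹ := by rw [h, mul_assoc, Units.mul_inv, mul_one]
  rw [hb, spectrum.units_conjugate]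

noncomputable def matCSymm (N : ℕ) : Matrix (Fin (N + 1)) (Fin (N + 1)) ℝ :=
  Matrix.of fun j k => Real.sqrt (matC N j k * matC N k j)

noncomputable def matCSymmetrizer (N : ℕ) : Matrix (Fin (N + 1)) (Fin (N + 1)) ℝ :=
  diagonal fun j => if (j : ℕ) = 0 then 1 else Real.sqrt 2

theorem matCSymm_isHermitian (N : ℕ) : (matCSymm N).IsHermitian := by
  ext j k
  simp [matCSymm, conjTranspose_apply, mul_comm]

theorem trace_matCSymm (N : ℕ) : (matCSymm N).trace = 0 := by
  simp [Matrix.trace, matCSymm, matC]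

theorem matCSymm_ne_zero {N : ℕ} (hN : 1 ≤ N) : matCSymm N ≠ 0 := by
  intro h
  have h01 : matCSymm N 0 ⟨1, by omega⟩ = Real.sqrt 2 := by
    simp only [matCSymm, matC, of_apply]
    norm_num [Fin.ext_iff]
  rw [h, Matrix.zero_apply] at h01
  exact (Real.sqrt_pos.mpr two_pos).ne h01

theorem isUnit_matCSymmetrizer (N : ℕ) : IsUnit (matCSymmetrizer N) := by
  rw [matCSymmetrizer, isUnit_diagonal, Pi.isUnit_iff]
  intro j
  split_ifs
  · exact isUnit_one
  · exact (Real.sqrt_pos.mpr two_pos).ne'.isUnit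

theorem matCSymmetrizer_mul_matC (N : ℕ) :
    matCSymmetrizer N * matC N = matCSymm N * matCSymmetrizer N := by
  ext j k
  rw [matCSymmetrizer, diagonal_mul, mul_diagonal]
  simp only [matCSymm, matC, of_apply, Fin.ext_iff]
  split_ifs <;> first | omega | norm_num

theorem exists_pos_mem_spectrum_matC {N : ℕ} (hN : 1 ≤ N) : ∃ μ > 0, μ ∈ spectrum ℝ (matC N) := by
  obtain ⟨i, hi⟩ :=
    (matCSymm_isHermitian N).exists_eigenvalues_pos (trace_matCSymm N) (matCSymm_ne_zero hN)
  refine ⟨_, hi, ?_⟩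
  rw [spectrum_eq_of_isUnit_of_mul_eq_mul (isUnit_matCSymmetrizer N) (matCSymmetrizer_mul_matC N)]
  exact (matCSymm_isHermitian N).eigenvalues_mem_spectrum_real i

theorem neg_matA_inv_eq {N : ℕ} {μ : ℝ} (hμ : μ ≠ 0) :
    -matA μ⁻¹ N = μ⁻¹ • (scalar (Fin (N + 1)) μ - matC N) := by
  ext j k
  simp only [Matrix.neg_apply, matA, matC, of_apply, Matrix.smul_apply, Matrix.sub_apply,
    scalar_apply, diagonal_apply, smul_eq_mul]
  split_ifs <;> field_simp <;> ring

/-- For every N ≥ 1 there is a positive birth rate λ for which 0 is an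
eigenvalue of A_N(λ), i.e. det(−A_N(λ)) = 0. -/
theorem exists_pos_root (N : ℕ) (hN : 1 ≤ N) :
    {lam : ℝ | 0 < lam ∧ (-(matA lam N)).det = 0}.Nonempty := by
  obtain ⟨μ, hμ, hspec⟩ := exists_pos_mem_spectrum_matC hN
  have hroot : (matC N).charpoly.eval μ = 0 := (mem_spectrum_iff_isRoot_charpoly.mp hspec).eq_zero
  refine ⟨μ⁻¹, inv_pos.mpr hμ, ?_⟩
  rw [neg_matA_inv_eq hμ.ne', det_smul, ← eval_charpoly, hroot, mul_zero]
end

section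
/- For every real number λ with 0 < λ ≤ 1/2 and every natural number N, one has det(−A_N(λ)) > 0; in particular 0 is not an eigenvalue of A_N(λ) for any such λ. -/
open Matrix Polynomial Filter

/-- The pure n×n tridiagonal matrix: 1 on the diagonal, −λ on the sub/super diagonals. -/
noncomputable def matT (lam : ℝ) (n : ℕ) : Matrix (Fin n) (Fin n) ℝ :=
  Matrix.of fun j k =>
    if (j : ℕ) = (k : ℕ) then 1
    else if (j : ℕ) + 1 = (k : ℕ) ∨ (k : ℕ) + 1 = (j : ℕ) then -lam
    else 0

lemma matT_apply (lam : ℝ) (n : ℕ) (j k : Fin n) :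
    matT lam n j k = if (j : ℕ) = (k : ℕ) then 1
      else if (j : ℕ) + 1 = (k : ℕ) ∨ (k : ℕ) + 1 = (j : ℕ) then -lam else 0 := rfl

lemma negA_apply (lam : ℝ) (N : ℕ) (j k : Fin (N + 1)) :
    (-(matA lam N)) j k =
      if (j : ℕ) = (k : ℕ) then 1
      else if (j : ℕ) = 0 ∧ (k : ℕ) = 1 then -(2 * lam)
      else if (j : ℕ) + 1 = (k : ℕ) ∨ (k : ℕ) + 1 = (j : ℕ) then -lam
      else 0 := by
  have hjk : (j = k) ↔ ((j : ℕ) = (k : ℕ)) := Fin.ext_iff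
  simp only [Matrix.neg_apply, matA, Matrix.of_apply, hjk]
  split_ifs <;> ring

lemma sa1_zero (n : ℕ) : (((1 : Fin (n + 2)).succAbove 0) : ℕ) = 0 := by
  have h : Fin.castSucc (0 : Fin (n + 1)) < 1 := by
    rw [Fin.lt_def, Fin.coe_castSucc, Fin.val_zero, Fin.val_one]
    omega
  rw [Fin.succAbove_of_castSucc_lt _ _ h, Fin.coe_castSucc, Fin.val_zero]

lemma sa1_succ (n : ℕ) (k : Fin n) :
    (((1 : Fin (n + 2)).succAbove k.succ) : ℕ) = (k : ℕ) + 2 := by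
  have h : (1 : Fin (n + 2)) ≤ Fin.castSucc k.succ := by
    rw [Fin.le_def, Fin.coe_castSucc, Fin.val_succ, Fin.val_one]
    omega
  rw [Fin.succAbove_of_le_castSucc _ _ h, Fin.val_succ, Fin.val_succ]

lemma T_sub (lam : ℝ) (n : ℕ) :
    (matT lam (n + 1)).submatrix Fin.succ Fin.succ = matT lam n := by
  ext j k
  simp only [submatrix_apply, matT_apply, Fin.val_succ]
  split_ifs <;> first | rfl | omega | simp_all | (exfalso; omega)

lemma detT_rec (lam : ℝ) (n : ℕ) :
    (matT lam (n + 2)).det = (matT lam (n + 1)).det - lam ^ 2 * (matT lam n).det := by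
  have hBsub :
      ((matT lam (n + 2)).submatrix Fin.succ ((1 : Fin (n + 2)).succAbove)).submatrix
        Fin.succ Fin.succ = matT lam n := by
    ext j k
    simp only [submatrix_apply, matT_apply, Fin.val_succ]
    rw [sa1_succ]
    split_ifs <;> first | rfl | omega | simp_all | (exfalso; omega)
  have hB : ((matT lam (n + 2)).submatrix Fin.succ ((1 : Fin (n + 2)).succAbove)).det
      = -lam * (matT lam n).det := by
    rw [det_succ_column_zero, Fin.sum_univ_succ]
    have htail : ∀ i : Fin n,
        ((matT lam (n + 2)).submatrix Fin.succ ((1 : Fin (n + 2)).succAbove)) i.succ 0 = 0 := by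
      intro i
      simp only [submatrix_apply, matT_apply, Fin.val_succ]
      rw [sa1_zero]
      split_ifs <;> first | rfl | omega | simp_all | (exfalso; omega)
    rw [Finset.sum_eq_zero (fun i _ => by rw [htail i]; ring), add_zero]
    have h00 : ((matT lam (n + 2)).submatrix Fin.succ ((1 : Fin (n + 2)).succAbove))
        (0 : Fin (n + 1)) 0 = -lam := by
      simp only [submatrix_apply, matT_apply, Fin.val_succ, Fin.val_zero]
      rw [sa1_zero]
      norm_num
    rw [h00, Fin.succAbove_zero, hBsub]
    simp
  have hT00 : matT lam (n + 2) 0 0 = 1 := by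
    simp [matT_apply]
  have hT01 : matT lam (n + 2) 0 1 = -lam := by
    rw [matT_apply, Fin.val_zero, Fin.val_one]
    norm_num
  have htail : ∀ i : Fin n, matT lam (n + 2) 0 i.succ.succ = 0 := by
    intro i
    simp only [matT_apply, Fin.val_succ, Fin.val_zero]
    split_ifs <;> first | rfl | omega | simp_all | (exfalso; omega)
  rw [det_succ_row_zero, Fin.sum_univ_succ, Fin.sum_univ_succ]
  rw [Finset.sum_eq_zero (fun i _ => by rw [htail i]; ring), add_zero]
  simp only [Fin.succ_zero_eq_one, Fin.succAbove_zero, Fin.val_zero, Fin.val_one]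
  rw [hT00, hT01, T_sub, hB]
  ring

lemma detM (lam : ℝ) (N : ℕ) :
    (-(matA lam (N + 1))).det
      = (matT lam (N + 1)).det - 2 * lam ^ 2 * (matT lam N).det := by
  have hMsub : (-(matA lam (N + 1))).submatrix Fin.succ Fin.succ = matT lam (N + 1) := by
    ext j k
    simp only [submatrix_apply, negA_apply, matT_apply, Fin.val_succ]
    split_ifs <;> first | rfl | omega | simp_all | (exfalso; omega)
  have hBsub :
      ((-(matA lam (N + 1))).submatrix Fin.succ ((1 : Fin (N + 2)).succAbove)).submatrix
        Fin.succ Fin.succ = matT lam N := by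
    ext j k
    simp only [submatrix_apply, negA_apply, matT_apply, Fin.val_succ]
    rw [sa1_succ]
    split_ifs <;> first | rfl | omega | simp_all | (exfalso; omega)
  have hB : ((-(matA lam (N + 1))).submatrix Fin.succ ((1 : Fin (N + 2)).succAbove)).det
      = -lam * (matT lam N).det := by
    rw [det_succ_column_zero, Fin.sum_univ_succ]
    have htail : ∀ i : Fin N,
        ((-(matA lam (N + 1))).submatrix Fin.succ ((1 : Fin (N + 2)).succAbove)) i.succ 0 = 0 := by
      intro i
      simp only [submatrix_apply, negA_apply, Fin.val_succ]
      rw [sa1_zero]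
      split_ifs <;> first | rfl | omega | simp_all | (exfalso; omega)
    rw [Finset.sum_eq_zero (fun i _ => by rw [htail i]; ring), add_zero]
    have h00 : ((-(matA lam (N + 1))).submatrix Fin.succ ((1 : Fin (N + 2)).succAbove))
        (0 : Fin (N + 1)) 0 = -lam := by
      simp only [submatrix_apply, negA_apply, Fin.val_succ, Fin.val_zero]
      rw [sa1_zero]
      norm_num
    rw [h00, Fin.succAbove_zero, hBsub]
    simp
  have hM00 : (-(matA lam (N + 1))) 0 0 = 1 := by
    rw [negA_apply]
    norm_num
  have hM01 : (-(matA lam (N + 1))) 0 1 = -(2 * lam) := by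
    rw [negA_apply, Fin.val_zero, Fin.val_one]
    norm_num
  have htail : ∀ i : Fin N, (-(matA lam (N + 1))) 0 i.succ.succ = 0 := by
    intro i
    simp only [negA_apply, Fin.val_succ, Fin.val_zero]
    split_ifs <;> first | rfl | omega | simp_all | (exfalso; omega)
  rw [det_succ_row_zero, Fin.sum_univ_succ, Fin.sum_univ_succ]
  rw [Finset.sum_eq_zero (fun i _ => by rw [htail i]; ring), add_zero]
  simp only [Fin.succ_zero_eq_one, Fin.succAbove_zero, Fin.val_zero, Fin.val_one]
  rw [hM00, hM01, hMsub, hB]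
  ring

lemma detT_pos (lam : ℝ) (h0 : 0 < lam) (h : lam ≤ 1 / 2) (n : ℕ) :
    0 < (matT lam n).det ∧ (matT lam n).det < 2 * (matT lam (n + 1)).det := by
  have hl2 : lam ^ 2 ≤ 1 / 4 := by nlinarith
  induction n with
  | zero =>
    have h01 : (matT lam 0).det = 1 := Matrix.det_fin_zero
    have h11 : (matT lam 1).det = 1 := by
      rw [Matrix.det_fin_one, matT_apply]
      norm_num
    rw [h01, h11]
    norm_num
  | succ n ih =>
    obtain ⟨hpos, hlt⟩ := ih
    have hrec := detT_rec lam n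
    have hmul : lam ^ 2 * (matT lam n).det ≤ (1 / 4) * (matT lam n).det :=
      mul_le_mul_of_nonneg_right hl2 hpos.le
    constructor
    · linarith
    · rw [hrec]
      linarith

/-- For 0 < λ ≤ 1/2 and every N, det(−A_N(λ)) > 0; in particular 0 is not an
eigenvalue of A_N(λ). -/
theorem det_pos_of_le_half (lam : ℝ) (h0 : 0 < lam) (h : lam ≤ 1 / 2) (N : ℕ) :
    0 < (-(matA lam N)).det := by
  cases N with
  | zero =>
    rw [Matrix.det_fin_one, negA_apply]
    norm_num
  | succ N =>
    rw [detM]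
    obtain ⟨hpos, hlt⟩ := detT_pos lam h0 h N
    have hl2 : lam ^ 2 ≤ 1 / 4 := by nlinarith
    have hmul : lam ^ 2 * (matT lam N).det ≤ (1 / 4) * (matT lam N).det :=
      mul_le_mul_of_nonneg_right hl2 hpos.le
    linarith
end

section
/- For every natural number N ≥ 1, the critical value satisfies λ_c(N) > 1/2. -/
open Matrix Polynomial Filter

/-!
Write `-A_N(λ) = 1 - λ C_N`, where `C_N` is the nonnegative tridiagonal matrix `matC N`.
For `0 < λ ≤ 1/2` the positive vector `w_k = (N+1)² - k²` satisfies `λ C_N w < w`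
componentwise, so `1 - λ C_N` becomes strictly diagonally dominant after rescaling the
columns by `w`, and is invertible by Gershgorin. On the other hand `k ↦ cos (k θ)` with
`θ = π / (2 (N+1))` is an eigenvector of `C_N` for the eigenvalue `2 cos θ`, so the set
whose infimum is `λ_c(N)` is nonempty; it is closed in `(0, ∞)` and bounded below by `1/2`,
hence contains its infimum.
-/

open Real

theorem Matrix.det_one_sub_ne_zero_of_mulVec_lt {n : Type*} [Fintype n] [DecidableEq n]
    {M : Matrix n n ℝ} (hM : ∀ i j, 0 ≤ M i j) {w : n → ℝ} (hw : ∀ i, 0 < w i)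
    (hMw : ∀ i, (M *ᵥ w) i < w i) : (1 - M).det ≠ 0 := by
  have hdom : ((1 - M) * diagonal w).det ≠ 0 := by
    refine det_ne_zero_of_sum_row_lt_diag fun i => ?_
    have hoff : ∀ k ∈ Finset.univ.erase i, ‖((1 - M) * diagonal w) i k‖ = M i k * w k := by
      intro k hk
      rw [mul_diagonal, sub_apply, one_apply_ne (Finset.ne_of_mem_erase hk).symm, zero_sub,
        neg_mul, norm_neg, Real.norm_of_nonneg (mul_nonneg (hM i k) (hw k).le)]
    calc ∑ k ∈ Finset.univ.erase i, ‖((1 - M) * diagonal w) i k‖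
        = (M *ᵥ w) i - M i i * w i := by
          rw [Finset.sum_congr rfl hoff, Finset.sum_erase_eq_sub (Finset.mem_univ i)]; rfl
      _ < (1 - M i i) * w i := by linarith [hMw i]
      _ ≤ ‖((1 - M) * diagonal w) i i‖ := by
          rw [mul_diagonal, sub_apply, one_apply_eq]; exact Real.le_norm_self _
  rw [det_mul] at hdom
  exact left_ne_zero_of_mul hdom

theorem neg_matA_eq (lam : ℝ) (N : ℕ) : -(matA lam N) = 1 - lam • matC N := by
  ext j k
  simp only [matA, matC, of_apply, Matrix.neg_apply, Matrix.sub_apply, Matrix.smul_apply,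
    one_apply, smul_eq_mul]
  split_ifs <;> ring

theorem matC_nonneg (N : ℕ) (j k : Fin (N + 1)) : 0 ≤ matC N j k := by
  simp only [matC, of_apply]
  split_ifs <;> norm_num

/-- The hypothesis `f (N + 1) = 0` makes the last row (and for `N = 0` the first) follow the
same three-term rule as the interior rows. -/
theorem matC_mulVec_apply {N : ℕ} {f : ℕ → ℝ} (hf : f (N + 1) = 0) (j : Fin (N + 1)) :
    (matC N *ᵥ fun k => f k) j = if (j : ℕ) = 0 then 2 * f 1 else f (j - 1) + f (j + 1) := by
  have hsum (g : ℕ → ℝ) : ∑ k : Fin (N + 1), g k = ∑ n ∈ Finset.range (N + 1), g n :=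
    Fin.sum_univ_eq_sum_range g (N + 1)
  have hrange : ∀ n ≤ N + 1, (if n ∈ Finset.range (N + 1) then f n else 0) = f n := by
    intro n hn
    split_ifs with h
    · rfl
    · rw [show n = N + 1 by simp at h; omega, hf]
  obtain ⟨j, hj⟩ := j
  simp only [mulVec, dotProduct]
  rcases j with _ | m
  · have hrow : ∀ k : Fin (N + 1),
        matC N ⟨0, hj⟩ k * f k = 2 * if (k : ℕ) = 1 then f k else 0 := by
      intro k
      simp only [matC, of_apply, Fin.ext_iff]
      split_ifs <;> grind
    simp only [hrow, ← Finset.mul_sum, hsum fun n => if n = 1 then f n else 0,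
      Finset.sum_ite_eq', hrange 1 (by omega), if_true]
  · have hrow : ∀ k : Fin (N + 1), matC N ⟨m + 1, hj⟩ k * f k =
        (if (k : ℕ) = m then f k else 0) + if (k : ℕ) = m + 2 then f k else 0 := by
      intro k
      simp only [matC, of_apply, Fin.ext_iff]
      split_ifs <;> grind
    simp only [hrow, Finset.sum_add_distrib, hsum fun n => if n = m then f n else 0,
      hsum fun n => if n = m + 2 then f n else 0, Finset.sum_ite_eq', hrange m (by omega),
      hrange (m + 2) (by omega)]
    simp

theorem matC_mulVec_sq_weight_lt (N : ℕ) (j : Fin (N + 1)) :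
    (matC N *ᵥ fun k => ((N : ℝ) + 1) ^ 2 - ((k : ℕ) : ℝ) ^ 2) j
      < 2 * (((N : ℝ) + 1) ^ 2 - ((j : ℕ) : ℝ) ^ 2) := by
  rw [matC_mulVec_apply (f := fun n : ℕ => ((N : ℝ) + 1) ^ 2 - (n : ℝ) ^ 2) (by push_cast; ring)]
  obtain ⟨_ | m, hj⟩ := j
  · norm_num
  · simp only [Nat.add_sub_cancel, if_neg (Nat.succ_ne_zero m)]
    push_cast
    nlinarith

theorem det_neg_matA_ne_zero {N : ℕ} {lam : ℝ} (h0 : 0 < lam) (h2 : lam ≤ 1 / 2) :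
    (-(matA lam N)).det ≠ 0 := by
  have hw (k : Fin (N + 1)) : 0 < ((N : ℝ) + 1) ^ 2 - ((k : ℕ) : ℝ) ^ 2 := by
    have hk : ((k : ℕ) : ℝ) + 1 ≤ N + 1 := by exact_mod_cast k.isLt
    nlinarith
  rw [neg_matA_eq]
  refine det_one_sub_ne_zero_of_mulVec_lt (fun i j => mul_nonneg h0.le (matC_nonneg N i j))
    hw fun i => ?_
  rw [smul_mulVec, Pi.smul_apply, smul_eq_mul]
  calc lam * (matC N *ᵥ fun k => ((N : ℝ) + 1) ^ 2 - ((k : ℕ) : ℝ) ^ 2) i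
      < lam * (2 * (((N : ℝ) + 1) ^ 2 - ((i : ℕ) : ℝ) ^ 2)) :=
        mul_lt_mul_of_pos_left (matC_mulVec_sq_weight_lt N i) h0
    _ ≤ ((N : ℝ) + 1) ^ 2 - ((i : ℕ) : ℝ) ^ 2 := by nlinarith [hw i]

theorem matC_mulVec_cos {N : ℕ} {θ : ℝ} (hθ : cos ((N + 1) * θ) = 0) :
    matC N *ᵥ (fun k : Fin (N + 1) => cos ((k : ℕ) * θ))
      = (2 * cos θ) • fun k : Fin (N + 1) => cos ((k : ℕ) * θ) := by
  have hlast : cos (((N + 1 : ℕ) : ℝ) * θ) = 0 := by exact_mod_cast hθ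
  ext ⟨_ | m, hj⟩
  · rw [matC_mulVec_apply (f := fun n : ℕ => cos (n * θ)) hlast]
    simp
  · rw [matC_mulVec_apply (f := fun n : ℕ => cos (n * θ)) hlast, Pi.smul_apply, smul_eq_mul,
      if_neg (Nat.succ_ne_zero m), Nat.add_sub_cancel, cos_add_cos]
    push_cast
    ring_nf
    rw [cos_neg]

theorem exists_pos_det_neg_matA_eq_zero {N : ℕ} (hN : 1 ≤ N) :
    ∃ lam > 0, (-(matA lam N)).det = 0 := by
  set θ := π / (2 * ((N : ℝ) + 1))
  have hθ : θ < π / 2 := div_lt_div_of_pos_left pi_pos two_pos (by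
    have : (1 : ℝ) ≤ N := by exact_mod_cast hN
    linarith)
  have hcos : 0 < 2 * cos θ :=
    mul_pos two_pos (cos_pos_of_mem_Ioo ⟨by linarith [pi_pos, show 0 < θ by positivity], hθ⟩)
  refine ⟨(2 * cos θ)⁻¹, inv_pos.2 hcos, ?_⟩
  rw [neg_matA_eq, ← exists_mulVec_eq_zero_iff]
  refine ⟨fun k : Fin (N + 1) => cos ((k : ℕ) * θ), fun h => by simpa using congrFun h 0, ?_⟩
  have hlast : cos ((N + 1) * θ) = 0 := by
    rw [show (N + 1) * θ = π / 2 by simp only [θ]; field_simp, cos_pi_div_two]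
  rw [sub_mulVec, one_mulVec, smul_mulVec, matC_mulVec_cos hlast, smul_smul,
    inv_mul_cancel₀ hcos.ne', one_smul, sub_self]

theorem isClosed_setOf_det_neg_matA_eq_zero (N : ℕ) :
    IsClosed {lam : ℝ | (-(matA lam N)).det = 0} := by
  simp only [neg_matA_eq]
  exact isClosed_eq (continuous_const.sub (continuous_id.smul continuous_const)).matrix_det
    continuous_const

/-- For every N ≥ 1 the critical value satisfies λ_c(N) > 1/2. -/
theorem lamCrit_gt_half (N : ℕ) (hN : 1 ≤ N) : 1 / 2 < lamCrit N := by
  unfold lamCrit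
  set S := {lam : ℝ | 0 < lam ∧ (-(matA lam N)).det = 0}
  have hS : ∀ lam ∈ S, 1 / 2 < lam := fun lam ⟨h0, hdet⟩ =>
    not_le.1 fun h2 => det_neg_matA_ne_zero h0 h2 hdet
  have hne : S.Nonempty := exists_pos_det_neg_matA_eq_zero hN
  have hbdd : BddBelow S := ⟨1 / 2, fun lam hlam => (hS lam hlam).le⟩
  have hhalf : 1 / 2 ≤ sInf S := le_csInf hne fun lam hlam => (hS lam hlam).le
  have hdet : sInf S ∈ {lam : ℝ | (-(matA lam N)).det = 0} :=
    closure_minimal (fun lam hlam => hlam.2) (isClosed_setOf_det_neg_matA_eq_zero N)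
      (csInf_mem_closure hne hbdd)
  exact hS _ ⟨by linarith, hdet⟩
end

section
/- For every natural number N ≥ 1, every real eigenvalue σ of the matrix C_N satisfies σ < 2. -/
open Matrix Polynomial Filter

theorem row0' (N : ℕ) (hN : 1 ≤ N) (v : Fin (N+1) → ℝ) :
    (matC N).mulVec v ⟨0, by omega⟩ = 2 * v ⟨1, by omega⟩ := by
  unfold Matrix.mulVec dotProduct
  have key : ∀ k : Fin (N+1), matC N ⟨0, by omega⟩ k * v k
      = if k = ⟨1, by omega⟩ then 2 * v k else 0 := by
    intro k
    by_cases hk : k = ⟨1, by omega⟩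
    · have hkv : (k : ℕ) = 1 := by rw [hk]
      rw [if_pos hk]
      have : matC N ⟨0, by omega⟩ k = 2 := by
        simp only [matC, Matrix.of_apply, Fin.ext_iff, Fin.val_mk, eq_self_iff_true, true_and]
        rw [if_neg (by omega), if_pos (by omega)]
      rw [this]
    · have hkv : (k : ℕ) ≠ 1 := fun h => hk (Fin.ext (by simpa using h))
      rw [if_neg hk]
      have : matC N ⟨0, by omega⟩ k = 0 := by
        simp only [matC, Matrix.of_apply, Fin.ext_iff, Fin.val_mk, eq_self_iff_true, true_and]
        rcases eq_or_ne (k : ℕ) 0 with h0 | h0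
        · rw [if_pos (by omega)]
        · rw [if_neg (by omega), if_neg (by omega), if_neg (by omega)]
      rw [this, zero_mul]
  rw [Finset.sum_congr rfl (fun k _ => key k), Finset.sum_ite_eq' Finset.univ]
  simp

theorem rowmid' (N : ℕ) (j : ℕ) (h1 : 1 ≤ j) (h2 : j + 1 ≤ N) (v : Fin (N+1) → ℝ) :
    (matC N).mulVec v ⟨j, by omega⟩ = v ⟨j-1, by omega⟩ + v ⟨j+1, by omega⟩ := by
  unfold Matrix.mulVec dotProduct
  have key : ∀ k : Fin (N+1), matC N ⟨j, by omega⟩ k * v k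
      = (if k = ⟨j-1, by omega⟩ then v k else 0) + (if k = ⟨j+1, by omega⟩ then v k else 0) := by
    intro k
    by_cases hk1 : k = ⟨j-1, by omega⟩
    · have hkv : (k : ℕ) = j - 1 := by rw [hk1]
      have hne : k ≠ ⟨j+1, by omega⟩ := fun h => by
        rw [h] at hkv; simp at hkv; omega
      rw [if_pos hk1, if_neg hne]
      have : matC N ⟨j, by omega⟩ k = 1 := by
        simp only [matC, Matrix.of_apply, Fin.ext_iff, Fin.val_mk, eq_self_iff_true, true_and]
        rw [if_neg (by omega), if_neg (by omega), if_pos (by omega)]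
      rw [this]; ring
    · by_cases hk2 : k = ⟨j+1, by omega⟩
      · have hkv : (k : ℕ) = j + 1 := by rw [hk2]
        rw [if_neg hk1, if_pos hk2]
        have : matC N ⟨j, by omega⟩ k = 1 := by
          simp only [matC, Matrix.of_apply, Fin.ext_iff, Fin.val_mk, eq_self_iff_true, true_and]
          rw [if_neg (by omega), if_neg (by omega), if_pos (by omega)]
        rw [this]; ring
      · have e1 : (k : ℕ) ≠ j - 1 := fun h => hk1 (Fin.ext (by simpa using h))
        have e2 : (k : ℕ) ≠ j + 1 := fun h => hk2 (Fin.ext (by simpa using h))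
        rw [if_neg hk1, if_neg hk2]
        have : matC N ⟨j, by omega⟩ k = 0 := by
          simp only [matC, Matrix.of_apply, Fin.ext_iff, Fin.val_mk, eq_self_iff_true, true_and]
          rcases eq_or_ne (k : ℕ) j with h0 | h0
          · rw [if_pos (by omega)]
          · rw [if_neg (by omega), if_neg (by omega), if_neg (by omega)]
        rw [this]; ring
  rw [Finset.sum_congr rfl (fun k _ => key k), Finset.sum_add_distrib,
    Finset.sum_ite_eq' Finset.univ, Finset.sum_ite_eq' Finset.univ]
  simp

theorem rowN' (N : ℕ) (hN : 1 ≤ N) (v : Fin (N+1) → ℝ) :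
    (matC N).mulVec v ⟨N, by omega⟩ = v ⟨N-1, by omega⟩ := by
  unfold Matrix.mulVec dotProduct
  have key : ∀ k : Fin (N+1), matC N ⟨N, by omega⟩ k * v k
      = if k = ⟨N-1, by omega⟩ then v k else 0 := by
    intro k
    by_cases hk : k = ⟨N-1, by omega⟩
    · have hkv : (k : ℕ) = N - 1 := by rw [hk]
      rw [if_pos hk]
      have : matC N ⟨N, by omega⟩ k = 1 := by
        simp only [matC, Matrix.of_apply, Fin.ext_iff, Fin.val_mk, eq_self_iff_true, true_and]
        rw [if_neg (by omega), if_neg (by omega), if_pos (by omega)]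
      rw [this]; ring
    · have e1 : (k : ℕ) ≠ N - 1 := fun h => hk (Fin.ext (by simpa using h))
      have e2 : (k : ℕ) ≤ N := by have := k.isLt; omega
      rw [if_neg hk]
      have : matC N ⟨N, by omega⟩ k = 0 := by
        simp only [matC, Matrix.of_apply, Fin.ext_iff, Fin.val_mk, eq_self_iff_true, true_and]
        rcases eq_or_ne (k : ℕ) N with h0 | h0
        · rw [if_pos (by omega)]
        · rw [if_neg (by omega), if_neg (by omega), if_neg (by omega)]
      rw [this, zero_mul]
  rw [Finset.sum_congr rfl (fun k _ => key k), Finset.sum_ite_eq' Finset.univ]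
  simp

private theorem eigvec_exists {n : Type*} [Fintype n] [DecidableEq n]
    (M : Matrix n n ℝ) (σ : ℝ) (h : σ ∈ spectrum ℝ M) :
    ∃ v ≠ 0, M.mulVec v = σ • v := by
  rw [spectrum.mem_iff, Matrix.isUnit_iff_isUnit_det] at h
  have hdet : (algebraMap ℝ (Matrix n n ℝ) σ - M).det = 0 := by
    by_contra h'
    exact h (isUnit_iff_ne_zero.mpr h')
  obtain ⟨v, hv0, hv⟩ := (Matrix.exists_mulVec_eq_zero_iff).mpr hdet
  refine ⟨v, hv0, ?_⟩
  have h1 : (algebraMap ℝ (Matrix n n ℝ) σ).mulVec v - M.mulVec v = 0 := by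
    rw [← Matrix.sub_mulVec, hv]
  have h2 : (algebraMap ℝ (Matrix n n ℝ) σ).mulVec v = σ • v := by
    funext i
    simp [Matrix.algebraMap_eq_diagonal, Matrix.mulVec_diagonal]
  rw [h2] at h1
  exact (sub_eq_zero.mp h1).symm

private theorem key_contra (N : ℕ) (hN : 1 ≤ N) (σ : ℝ) (hσ : 2 ≤ σ) (w : ℕ → ℝ)
    (h0 : 0 < w 0)
    (E0 : 2 * w 1 = σ * w 0)
    (Emid : ∀ j, 1 ≤ j → j + 1 ≤ N → w (j - 1) + w (j + 1) = σ * w j)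
    (EN : w (N - 1) = σ * w N) : False := by
  have mono : ∀ j, j + 1 ≤ N → 0 < w j ∧ w j ≤ w (j + 1) := by
    intro j
    induction j with
    | zero =>
      intro _
      refine ⟨h0, ?_⟩
      have h2 : 2 * w 0 ≤ σ * w 0 := by nlinarith
      linarith
    | succ j ih =>
      intro h
      obtain ⟨hpos, hle⟩ := ih (by omega)
      have hE := Emid (j + 1) (by omega) (by omega)
      simp only [Nat.add_sub_cancel] at hE
      have hp1 : 0 < w (j + 1) := lt_of_lt_of_le hpos hle
      refine ⟨hp1, ?_⟩
      have h2 : 2 * w (j + 1) ≤ σ * w (j + 1) := by nlinarith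
      linarith
  obtain ⟨hpos, hle⟩ := mono (N - 1) (by omega)
  have hr : N - 1 + 1 = N := by omega
  rw [hr] at hle
  have hwN : 0 < w N := lt_of_lt_of_le hpos hle
  have h2 : 2 * w N ≤ σ * w N := by nlinarith
  linarith

/-- For every N ≥ 1, every real eigenvalue σ of C_N satisfies σ < 2. -/
theorem spectrum_matC_lt_two (N : ℕ) (hN : 1 ≤ N) :
    ∀ σ ∈ spectrum ℝ (matC N), σ < 2 := by
  intro σ hσmem
  by_contra hlt
  push_neg at hlt
  obtain ⟨v, hv0, hv⟩ := eigvec_exists (matC N) σ hσmem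
  have hcomp : ∀ i : Fin (N + 1), (matC N).mulVec v i = σ * v i := by
    intro i; rw [hv]; simp
  set u : ℕ → ℝ := fun j => v ⟨min j N, by omega⟩ with hu
  have uval : ∀ j, j ≤ N → ∀ (h : j < N + 1), u j = v ⟨j, h⟩ := by
    intro j hj h
    simp only [hu]
    congr 1
    exact Fin.ext (by simp [min_eq_left hj])
  have e0 : 2 * u 1 = σ * u 0 := by
    rw [uval 1 hN (by omega), uval 0 (by omega) (by omega)]
    exact (row0' N hN v).symm.trans (hcomp ⟨0, by omega⟩)
  have emid : ∀ j, 1 ≤ j → j + 1 ≤ N → u (j - 1) + u (j + 1) = σ * u j := by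
    intro j h1 h2
    rw [uval (j - 1) (by omega) (by omega), uval (j + 1) (by omega) (by omega),
      uval j (by omega) (by omega)]
    exact (rowmid' N j h1 h2 v).symm.trans (hcomp ⟨j, by omega⟩)
  have eN : u (N - 1) = σ * u N := by
    rw [uval (N - 1) (by omega) (by omega), uval N (by omega) (by omega)]
    exact (rowN' N hN v).symm.trans (hcomp ⟨N, by omega⟩)
  rcases lt_trichotomy (u 0) 0 with ha | ha | ha
  · refine key_contra N hN σ hlt (fun j => -u j) ?_ ?_ ?_ ?_
    · show 0 < -u 0; linarith
    · show 2 * -u 1 = σ * -u 0; linarith [e0]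
    · intro j h1 h2
      show -u (j - 1) + -u (j + 1) = σ * -u j
      have := emid j h1 h2; linarith
    · show -u (N - 1) = σ * -u N; linarith [eN]
  · -- u 0 = 0 ⇒ v = 0, contradiction
    have Z : ∀ j, j ≤ N → u j = 0 := by
      intro j
      induction j using Nat.strong_induction_on with
      | _ j ih =>
        intro hj
        match j, hj with
        | 0, _ => exact ha
        | 1, _ =>
          have : 2 * u 1 = σ * u 0 := e0
          rw [ha] at this
          linarith [this]
        | (m + 2), hj =>
          have hE := emid (m + 1) (by omega) (by omega)
          simp only [Nat.add_sub_cancel] at hE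
          have z1 := ih m (by omega) (by omega)
          have z2 := ih (m + 1) (by omega) (by omega)
          rw [z1, z2] at hE
          linarith [hE]
    apply hv0
    funext i
    have h1 : (i : ℕ) ≤ N := Nat.lt_succ_iff.mp i.isLt
    have h2 := Z (i : ℕ) h1
    rw [uval _ h1 i.isLt] at h2
    exact h2
  · exact key_contra N hN σ hlt u ha e0 emid eN
end

section
/- For every real number λ > √2/2 and every natural number N ≥ 1, one has λ > λ_c(N); consequently the branching random walk restricted to I_N with birth rate λ survives with positive probability for every N ≥ 1. -/
open Matrix Polynomial Filter

/-- naturalized entries of −A. -/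
noncomputable def Fent (mu : ℝ) (m k : ℕ) : ℝ :=
  if m = k then 1
  else if m = 0 ∧ k = 1 then -(2 * mu)
  else if m + 1 = k ∨ k + 1 = m then -mu
  else 0

lemma entry_eq (mu : ℝ) (N : ℕ) (j k : Fin (N + 1)) :
    (-(matA mu N)) j k = Fent mu (j : ℕ) (k : ℕ) := by
  simp only [Matrix.neg_apply, matA, Matrix.of_apply, Fent, Fin.ext_iff]
  split_ifs <;> ring

/-- For λ > √2/2 and every N ≥ 1, one has λ > λ_c(N); hence (by the survival
criterion) the restricted process survives for every N ≥ 1. -/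
theorem lamCrit_lt_of_gt_sqrt_two_div_two (lam : ℝ) (h : Real.sqrt 2 / 2 < lam)
    (N : ℕ) (hN : 1 ≤ N) : lamCrit N < lam := by
  have hs2 : Real.sqrt 2 * Real.sqrt 2 = 2 := Real.mul_self_sqrt (by norm_num)
  have hs2pos : (0:ℝ) < Real.sqrt 2 := Real.sqrt_pos.mpr (by norm_num)
  set θ : ℝ := Real.pi / (2 * (N + 1)) with hθdef
  have hNpos : (0:ℝ) < (N:ℝ) + 1 := by positivity
  have h1N : (1:ℝ) ≤ (N:ℝ) := by exact_mod_cast hN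
  have hθpos : 0 < θ := by
    apply div_pos Real.pi_pos; positivity
  have hθle : θ ≤ Real.pi / 4 := by
    rw [hθdef, div_le_div_iff₀ (by positivity) (by norm_num)]
    nlinarith [Real.pi_pos]
  set c : ℝ := Real.cos θ with hcdef
  have hcge : Real.sqrt 2 / 2 ≤ c := by
    rw [hcdef, ← Real.cos_pi_div_four]
    exact Real.cos_le_cos_of_nonneg_of_le_pi hθpos.le
      (by linarith [Real.pi_pos]) hθle
  have hcpos : 0 < c := lt_of_lt_of_le (by positivity) hcge
  obtain ⟨μ, hμc, hμpos, hμle⟩ :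
      ∃ μ : ℝ, μ * (2 * c) = 1 ∧ 0 < μ ∧ μ ≤ Real.sqrt 2 / 2 := by
    refine ⟨1 / (2 * c), by field_simp, by positivity, ?_⟩
    rw [div_le_div_iff₀ (by positivity) (by norm_num)]
    nlinarith
  have hμlt : μ < lam := lt_of_le_of_lt hμle h
  -- the kernel vector
  set v : Fin (N + 1) → ℝ := fun k => Real.cos ((k : ℕ) * θ) with hvdef
  have hvne : v ≠ 0 := by
    intro hv
    have := congrFun hv ⟨0, Nat.succ_pos N⟩
    simp [hvdef] at this
  have hcosN1 : Real.cos (((N : ℝ) + 1) * θ) = 0 := by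
    have : ((N : ℝ) + 1) * θ = Real.pi / 2 := by
      rw [hθdef]; field_simp
    rw [this, Real.cos_pi_div_two]
  -- row sums over range (N+2)
  have hrow : ∀ m : ℕ, m ≤ N →
      ∑ k ∈ Finset.range (N + 2), Fent μ m k * Real.cos ((k : ℝ) * θ) = 0 := by
    intro m hm
    have hsub : ({m - 1, m, m + 1} : Finset ℕ) ⊆ Finset.range (N + 2) := by
      intro x hx
      simp only [Finset.mem_insert, Finset.mem_singleton] at hx
      rcases hx with rfl | rfl | rfl <;> simp [Finset.mem_range] <;> omega
    have hzero : ∀ k ∈ Finset.range (N + 2), k ∉ ({m - 1, m, m + 1} : Finset ℕ) →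
        Fent μ m k * Real.cos ((k : ℝ) * θ) = 0 := by
      intro k _ hk
      simp only [Finset.mem_insert, Finset.mem_singleton, not_or] at hk
      obtain ⟨h1, h2, h3⟩ := hk
      have : Fent μ m k = 0 := by
        rw [Fent]
        rw [if_neg (by omega), if_neg (by omega), if_neg (by omega)]
      rw [this, zero_mul]
    rw [← Finset.sum_subset hsub hzero]
    rcases Nat.eq_zero_or_pos m with rfl | hmpos
    · have : ({0 - 1, 0, 0 + 1} : Finset ℕ) = {0, 1} := by decide
      rw [this, Finset.sum_pair (by norm_num)]
      have e0 : Fent μ 0 0 = 1 := by rw [Fent]; simp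
      have e1 : Fent μ 0 1 = -(2 * μ) := by rw [Fent]; norm_num
      rw [e0, e1]
      push_cast
      simp only [zero_mul, one_mul, Real.cos_zero]
      linear_combination -hμc
    · have hne1 : m - 1 ≠ m := by omega
      have hne2 : m - 1 ≠ m + 1 := by omega
      have hne3 : m ≠ m + 1 := by omega
      rw [show ({m - 1, m, m + 1} : Finset ℕ) = insert (m-1) (insert m {m+1}) from rfl]
      rw [Finset.sum_insert (by simp [hne1, hne2]), Finset.sum_insert (by simp [hne3]),
        Finset.sum_singleton]
      have e1 : Fent μ m (m - 1) = -μ := by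
        rw [Fent, if_neg (by omega), if_neg (by omega), if_pos (by omega)]
      have e2 : Fent μ m m = 1 := by rw [Fent]; simp
      have e3 : Fent μ m (m + 1) = -μ := by
        rw [Fent, if_neg (by omega), if_neg (by omega), if_pos (by omega)]
      rw [e1, e2, e3]
      have hcast : ((m - 1 : ℕ) : ℝ) = (m : ℝ) - 1 := by
        have h1m : (1:ℕ) ≤ m := hmpos
        push_cast [h1m]; ring
      rw [hcast]
      push_cast
      have trig : Real.cos ((m : ℝ) * θ - θ) + Real.cos ((m : ℝ) * θ + θ)
          = 2 * c * Real.cos ((m : ℝ) * θ) := by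
        rw [hcdef, Real.cos_sub, Real.cos_add]; ring
      rw [show ((m:ℝ) - 1) * θ = (m:ℝ) * θ - θ from by ring,
        show ((m:ℝ) + 1) * θ = (m:ℝ) * θ + θ from by ring]
      linear_combination (-μ) * trig - Real.cos ((m:ℝ) * θ) * hμc
  -- det vanishes at μ
  have hdet : (-(matA μ N)).det = 0 := by
    rw [← Matrix.exists_mulVec_eq_zero_iff]
    refine ⟨v, hvne, ?_⟩
    funext j
    have hj : (j : ℕ) ≤ N := Nat.lt_succ_iff.mp j.isLt
    show ∑ k, (-(matA μ N)) j k * v k = 0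
    have step1 : ∑ k, (-(matA μ N)) j k * v k
        = ∑ k : Fin (N + 1), Fent μ (j : ℕ) (k : ℕ) * Real.cos (((k : ℕ) : ℝ) * θ) := by
      apply Finset.sum_congr rfl
      intro k _
      rw [entry_eq, hvdef]
    rw [step1]
    rw [Fin.sum_univ_eq_sum_range (fun i => Fent μ (j : ℕ) i * Real.cos ((i : ℝ) * θ)) (N + 1)]
    have hlast : Fent μ (j : ℕ) (N + 1) * Real.cos (((N + 1 : ℕ) : ℝ) * θ) = 0 := by
      rcases eq_or_lt_of_le hj with heq | hlt
      · have : Real.cos (((N + 1 : ℕ) : ℝ) * θ) = 0 := by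
          push_cast; exact hcosN1
        rw [this, mul_zero]
      · have : Fent μ (j : ℕ) (N + 1) = 0 := by
          rw [Fent, if_neg (by omega), if_neg (by omega), if_neg (by omega)]
        rw [this, zero_mul]
    have hext : ∑ k ∈ Finset.range (N + 2), Fent μ (j : ℕ) k * Real.cos ((k : ℝ) * θ)
        = ∑ k ∈ Finset.range (N + 1), Fent μ (j : ℕ) k * Real.cos ((k : ℝ) * θ) := by
      rw [Finset.sum_range_succ, hlast, add_zero]
    rw [← hext]
    exact hrow _ hj
  -- conclude
  have hmem : μ ∈ {lam : ℝ | 0 < lam ∧ (-(matA lam N)).det = 0} := ⟨hμpos, hdet⟩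
  have hbdd : BddBelow {lam : ℝ | 0 < lam ∧ (-(matA lam N)).det = 0} :=
    ⟨0, fun x hx => hx.1.le⟩
  exact lt_of_le_of_lt (csInf_le hbdd hmem) hμlt
end
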